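/- arXiv:1304.3799 — 3 statements merged into one kernel-verified Lean document; each statement's English description precedes it below -/
import Mathlib

section
/- Let E be a finite-dimensional connected graded algebra of length d, let ε be the automorphism of E defined by ε(x) = (-1)^i x for x ∈ E_i, and let n > d. Then the trivial extension Γ(E, ε^{n-1}, n) is a graded symmetric algebra: its Frobenius form satisfies ⟨a,b⟩ = (-1)^{i(n-i)}⟨b,a⟩ for homogeneous a of degree i and b of degree n-i. -/
/-- The product of the trivial extension `Γ(E,σ,n) = E ⊕ E^*_σ(-n)`:
`(x₁,f₁)*(x₂,f₂) = (x₁x₂, x₁·f₂ + f₁·σ(x₂))`, where `(x·f)(y) = f(yx)` and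
`(f·x)(y) = f(xy)`. -/
noncomputable def gprod {k E : Type*} [Field k] [Ring E] [Algebra k E] (σ : E ≃ₐ[k] E)
    (a b : E × Module.Dual k E) : E × Module.Dual k E :=
  (a.1 * b.1,
    b.2.comp (LinearMap.mulRight k a.1) + a.2.comp (LinearMap.mulLeft k (σ b.1)))

/-- The bilinear form `⟨(x₁,f₁),(x₂,f₂)⟩ = f₂(x₁) + f₁(σ(x₂))` on `Γ(E,σ,n)`. -/
noncomputable def gform {k E : Type*} [Field k] [Ring E] [Algebra k E] (σ : E ≃ₐ[k] E)
    (a b : E × Module.Dual k E) : k :=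
  b.2 a.1 + a.2 (σ b.1)

private lemma np_aux {k : Type*} [Field k] (a b : ℕ) (h : Even (a + b)) :
    (-1 : k) ^ a = (-1) ^ b := by
  have h1 : ((-1 : k) ^ a) * ((-1) ^ b) = 1 := by
    rw [← pow_add]; exact Even.neg_one_pow h
  have h2 : ((-1 : k) ^ b) * ((-1) ^ b) = 1 := by
    rw [← pow_add]; exact Even.neg_one_pow ⟨b, rfl⟩
  calc (-1 : k) ^ a = (-1) ^ a * ((-1) ^ b * (-1) ^ b) := by rw [h2, mul_one]
    _ = ((-1) ^ a * (-1) ^ b) * (-1) ^ b := by ring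
    _ = (-1) ^ b := by rw [h1, one_mul]

/-- let `E` be a finite-dimensional connected graded algebra of length
`d`, `ε` its sign automorphism (`ε(x) = (-1)^i x` on `E_i`) and `n > d`.  Then the
trivial extension `Γ(E, ε^{n-1}, n)` is graded symmetric: for homogeneous elements
`a = (x,f)` of degree `i` and `b = (y,g)` of degree `n-i` (so `x ∈ E_i`, `f` supported
on `E_{n-i}`, `y ∈ E_{n-i}`, `g` supported on `E_i`), the Frobenius form satisfies
`⟨a,b⟩ = (-1)^{i(n-i)} ⟨b,a⟩`. -/
theorem stmt2 (k E : Type*) [Field k] [CharZero k] [Ring E] [Algebra k E]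
    [FiniteDimensional k E] (𝒜 : ℕ → Submodule k E) [GradedAlgebra 𝒜]
    (d : ℕ) (hconn : 𝒜 0 = Submodule.span k {1})
    (hlen : 𝒜 d ≠ ⊥) (hbound : ∀ i, d < i → 𝒜 i = ⊥)
    (ε : E ≃ₐ[k] E) (hε : ∀ i, ∀ x ∈ 𝒜 i, ε x = ((-1 : k) ^ i) • x)
    (n : ℕ) (hn : d < n)
    (i : ℕ) (hi : i ≤ n)
    (x y : E) (f g : Module.Dual k E)
    (hx : x ∈ 𝒜 i) (hf : ∀ j, j + i ≠ n → ∀ u ∈ 𝒜 j, f u = 0)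
    (hy : y ∈ 𝒜 (n - i)) (hg : ∀ j, j ≠ i → ∀ u ∈ 𝒜 j, g u = 0) :
    gform (ε ^ (n - 1)) (x, f) (y, g)
      = ((-1 : k) ^ (i * (n - i))) * gform (ε ^ (n - 1)) (y, g) (x, f) := by
  have hn1 : 1 ≤ n := Nat.one_le_iff_ne_zero.mpr (by omega)
  have key : ∀ (m j : ℕ) (z : E), z ∈ 𝒜 j → (ε ^ m) z = ((-1 : k) ^ (j * m)) • z := by
    intro m
    induction m with
    | zero => intro j z hz; simp
    | succ m ih =>
      intro j z hz
      rw [pow_succ, AlgEquiv.mul_apply, hε j z hz, map_smul, ih j z hz,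
        smul_smul, ← pow_add]
      congr 1
      ring
  have hεy : (ε ^ (n - 1)) y = ((-1 : k) ^ ((n - i) * (n - 1))) • y := key _ _ _ hy
  have hεx : (ε ^ (n - 1)) x = ((-1 : k) ^ (i * (n - 1))) • x := key _ _ _ hx
  simp only [gform, hεy, hεx, map_smul, smul_eq_mul]
  have h1 : (-1 : k) ^ ((n - i) * (n - 1)) = (-1) ^ (i * (n - i)) := by
    apply np_aux
    rw [mul_comm i (n - i), ← Nat.mul_add]
    rcases Nat.even_or_odd (n - i) with h | h
    · exact h.mul_right _
    · have : Even ((n - 1) + i) := by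
        rw [Nat.odd_iff] at h; rw [Nat.even_iff]; omega
      exact this.mul_left _
  have h2 : (-1 : k) ^ (i * (n - i)) * (-1) ^ (i * (n - 1)) = 1 := by
    rw [← pow_add, ← Nat.mul_add]
    apply Even.neg_one_pow
    rcases Nat.even_or_odd i with h | h
    · exact h.mul_right _
    · have : Even ((n - i) + (n - 1)) := by
        rw [Nat.odd_iff] at h; rw [Nat.even_iff]; omega
      exact this.mul_left _
  rw [h1, mul_add, ← mul_assoc, h2, one_mul]
  ring
end

section
/- Let V be a finite-dimensional vector space, σ: V → V a linear bijection, d ≥ 2, and w ∈ V^{⊗d} a twisted superpotential with respect to σ (i.e., w = (-1)^{d-1}τ_d^{d-1}(σ⊗id^{⊗(d-1)})(w)). Let z be a new vector and set V̂ = V ⊕ kz. Define ŵ = Σ_{i=0}^{d} (-1)^i τ_{d+1}^i (id ⊗ σ^{⊗i} ⊗ id^{⊗(d-i)})(z ⊗ w) ∈ V̂^{⊗(d+1)}. Then ŵ is a superpotential of degree d+1, i.e., ŵ = (-1)^d τ_{d+1}^d(ŵ). -/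
/-- Coefficient model of `V^{⊗d}` for `V = k^n` with its standard basis:
a tensor is given by its coefficient function on `d`-tuples of basis indices. -/
abbrev Tens (k : Type*) (n d : ℕ) := (Fin d → Fin n) → k

/-- The linear map on `V^{⊗d}` permuting the tensor factors according to `s`. -/
def permMap (k : Type*) [Field k] (n d : ℕ) (s : Equiv.Perm (Fin d)) :
    Tens k n d →ₗ[k] Tens k n d where
  toFun w := fun i => w (i ∘ s)
  map_add' _ _ := rfl
  map_smul' _ _ := rfl

/-- The swap `τ` of the adjacent tensor factors at positions `j, j+1`
(the identity if out of range). -/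
def adjSwap (d j : ℕ) : Equiv.Perm (Fin d) :=
  if h : j + 1 < d then Equiv.swap ⟨j, Nat.lt_of_succ_lt h⟩ ⟨j + 1, h⟩ else 1

/-- `tauMapFrom k n d a m` is `1^{⊗a} ⊗ τ_{d-a}^{m}` acting on `V^{⊗d}`, defined
recursively as in the paper: `τ^0 = id`, `τ^1 = τ⊗1⋯`, and
`τ^{m+1} = (1^{⊗(a+m)} ⊗ τ ⊗ 1^{⋯}) ∘ τ^m` (swap at positions `a+m, a+m+1`).
In particular `tauMapFrom k n d 0 m = τ_d^m`. -/
def tauMapFrom (k : Type*) [Field k] (n d a : ℕ) : ℕ → (Tens k n d →ₗ[k] Tens k n d)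
  | 0 => LinearMap.id
  | (m + 1) => (permMap k n d (adjSwap d (a + m))).comp (tauMapFrom k n d a m)

/-- `blockMap k n d S P` applies the matrix `S` (an endomorphism of `V = k^n` in the
standard basis, `σ(e_j) = Σ_i S i j e_i`) to every tensor factor at a position
satisfying `P`, and the identity to all other factors.  E.g. `P = (· = 0)` gives
`σ ⊗ 1^{⊗(d-1)}` and `P = ⊤` gives `σ^{⊗d}`. -/
noncomputable def blockMap (k : Type*) [Field k] (n d : ℕ)
    (S : Matrix (Fin n) (Fin n) k) (P : Fin d → Prop) [DecidablePred P] :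
    Tens k n d →ₗ[k] Tens k n d where
  toFun w := fun i => ∑ j : Fin d → Fin n,
    (∏ p, if P p then S (i p) (j p) else if i p = j p then 1 else 0) * w j
  map_add' w₁ w₂ := by
    funext i
    simp [mul_add, Finset.sum_add_distrib]
  map_smul' c w := by
    funext i
    simp only [Pi.smul_apply, smul_eq_mul, RingHom.id_apply]
    rw [Finset.mul_sum]
    exact Finset.sum_congr rfl fun j _ => by ring

/-- Extension of the matrix of `σ : V → V` to `V̂ = kz ⊕ V`, acting as the identity on
the new basis vector `z` (index `0`) and as `σ` on `V` (indices `1,…,n`). -/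
noncomputable def extMatrix (k : Type*) [Field k] (n : ℕ) (S : Matrix (Fin n) (Fin n) k) :
    Matrix (Fin (n + 1)) (Fin (n + 1)) k :=
  Matrix.of (Fin.cases (motive := fun _ => Fin (n + 1) → k)
    (Fin.cons 1 (fun _ => 0)) (fun a => Fin.cons 0 (fun b => S a b)))

/-- The element `z ⊗ w ∈ V̂^{⊗(d+1)}` for `w ∈ V^{⊗d}`, where `V̂ = kz ⊕ V`,
`z` is the basis vector with index `0` and `V` embeds via `Fin.succ`. -/
noncomputable def zTensor (k : Type*) [Field k] (n d : ℕ) (w : Tens k n d) :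
    Tens k (n + 1) (d + 1) :=
  fun i => (if i 0 = 0 then (1 : k) else 0) *
    ∑ j : Fin d → Fin n, (∏ p, if i p.succ = (j p).succ then (1 : k) else 0) * w j


section Helpers

variable {k : Type*} [Field k]

/-- The index function of the cycle `ρ_m = (0 1 … m)⁻¹`: `0 ↦ m`, `q ↦ q-1` for
`1 ≤ q ≤ m`, identity above `m`. -/
def rotIdx (D m : ℕ) (q : Fin D) : Fin D :=
  if (q : ℕ) = 0 then ⟨m % D, Nat.mod_lt m q.pos⟩
  else if (q : ℕ) ≤ m then ⟨(q : ℕ) - 1, by omega⟩ else q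

lemma tau_apply (N D m : ℕ) (hm : m < D) (x : Tens k N D) (i : Fin D → Fin N) :
    tauMapFrom k N D 0 m x i = x (fun q => i (rotIdx D m q)) := by
  induction m generalizing i with
  | zero =>
    simp only [tauMapFrom, LinearMap.id_coe, id_eq]
    congr 1
    funext q
    have : rotIdx D 0 q = q := by
      simp only [rotIdx]
      split_ifs with h1 h2
      · exact Fin.ext (by simp [Nat.zero_mod]; omega)
      · omega
      · rfl
    rw [this]
  | succ m ih =>
    have hm' : m < D := Nat.lt_of_succ_lt hm
    simp only [tauMapFrom, LinearMap.comp_apply]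
    have hz : 0 + m = m := Nat.zero_add m
    rw [hz]
    show (tauMapFrom k N D 0 m x) (i ∘ (adjSwap D m)) = _
    rw [ih hm' (i ∘ (adjSwap D m))]
    congr 1
    funext q
    show i (adjSwap D m (rotIdx D m q)) = i (rotIdx D (m+1) q)
    congr 1
    have hd1 : m + 1 < D := hm
    simp only [adjSwap, dif_pos hd1, rotIdx]
    have hmD : m % D = m := Nat.mod_eq_of_lt hm'
    have hmD1 : (m+1) % D = m + 1 := Nat.mod_eq_of_lt hm
    split_ifs <;>
      (rw [Equiv.swap_apply_def] <;> split_ifs <;> (apply Fin.ext <;> simp_all [Fin.ext_iff] <;> omega))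

lemma sum_pi_prod {D N : ℕ} (G : Fin D → Fin N → k) :
    ∑ b : Fin D → Fin N, ∏ q, G q (b q) = ∏ q, ∑ β, G q β := by
  rw [Finset.prod_univ_sum]
  rw [Fintype.piFinset_univ]

@[simp] lemma extMatrix_zero_zero (n : ℕ) (S : Matrix (Fin n) (Fin n) k) :
    extMatrix k n S 0 0 = 1 := by
  simp [extMatrix]

@[simp] lemma extMatrix_zero_succ (n : ℕ) (S : Matrix (Fin n) (Fin n) k) (b : Fin n) :
    extMatrix k n S 0 b.succ = 0 := by
  simp [extMatrix]

@[simp] lemma extMatrix_succ_zero (n : ℕ) (S : Matrix (Fin n) (Fin n) k) (a : Fin n) :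
    extMatrix k n S a.succ 0 = 0 := by
  simp [extMatrix]

@[simp] lemma extMatrix_succ_succ (n : ℕ) (S : Matrix (Fin n) (Fin n) k) (a b : Fin n) :
    extMatrix k n S a.succ b.succ = S a b := by
  simp [extMatrix]

lemma sum_delta_mul {N : ℕ} (x : Fin (N+1)) (S : Matrix (Fin N) (Fin N) k) (c : Fin N) :
    ∑ β : Fin N, (if x = β.succ then (1:k) else 0) * S β c
      = extMatrix k N S x c.succ := by
  induction x using Fin.cases with
  | zero =>
    rw [extMatrix_zero_succ]
    apply Finset.sum_eq_zero
    intro β _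
    rw [if_neg, zero_mul]
    exact fun h => (Fin.succ_ne_zero β h.symm)
  | succ a =>
    rw [extMatrix_succ_succ]
    have h1 : ∀ β : Fin N, (if a.succ = β.succ then (1:k) else 0) * S β c
        = if β = a then S β c else 0 := by
      intro β
      by_cases h : β = a
      · subst h; simp
      · rw [if_neg (fun hc => h (Fin.succ_injective _ hc.symm)), if_neg h, zero_mul]
    rw [Finset.sum_congr rfl fun β _ => h1 β, Finset.sum_ite_eq']
    simp

end Helpers

section Main

variable {k : Type*} [Field k]

lemma blockMap_apply {n d : ℕ} (S : Matrix (Fin n) (Fin n) k) (P : Fin d → Prop)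
    [DecidablePred P] (x : Tens k n d) (i : Fin d → Fin n) :
    blockMap k n d S P x i = ∑ j : Fin d → Fin n,
      (∏ p, if P p then S (i p) (j p) else if i p = j p then 1 else 0) * x j := rfl

/-- The basic building block: `σ` applied to the first `m` factors of `w`, with
incoming indices `t` living in the big space. -/
noncomputable def gfun {n d : ℕ} (S : Matrix (Fin n) (Fin n) k)
    (w : Tens k n d) (m : ℕ) (t : Fin d → Fin (n+1)) : k :=
  ∑ b : Fin d → Fin n,
    (∏ q : Fin d, if (q:ℕ) < m then extMatrix k n S (t q) ((b q).succ)
      else if t q = (b q).succ then (1:k) else 0) * w b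

lemma blockZ {n d : ℕ} (S : Matrix (Fin n) (Fin n) k) (w : Tens k n d) (m : ℕ)
    (j : Fin (d+1) → Fin (n+1)) :
    blockMap k (n+1) (d+1) (extMatrix k n S) (fun p => 1 ≤ (p:ℕ) ∧ (p:ℕ) ≤ m)
      (zTensor k n d w) j
      = (if j 0 = 0 then (1:k) else 0) * gfun S w m (fun q => j q.succ) := by
  rw [blockMap_apply]
  set c : Fin (d+1) → Fin (n+1) → k := fun p y =>
    if 1 ≤ (p:ℕ) ∧ (p:ℕ) ≤ m then extMatrix k n S (j p) y
    else if j p = y then 1 else 0 with hc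
  set cb : (Fin d → Fin n) → (Fin (d+1) → Fin (n+1)) :=
    fun b => Fin.cons 0 (fun q => (b q).succ) with hcb
  have step1 : ∀ l : Fin (d+1) → Fin (n+1),
      (∏ p, c p (l p)) * zTensor k n d w l
        = ∑ b : Fin d → Fin n,
            (∏ p, c p (l p) * (if l p = cb b p then (1:k) else 0)) * w b := by
    intro l
    have hprod : ∀ b : Fin d → Fin n,
        (∏ p, c p (l p) * (if l p = cb b p then (1:k) else 0))
          = (∏ p, c p (l p)) * ((if l 0 = 0 then (1:k) else 0) *
              ∏ q : Fin d, if l q.succ = (b q).succ then (1:k) else 0) := by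
      intro b
      rw [Finset.prod_mul_distrib]
      congr 1
      rw [Fin.prod_univ_succ]
      simp [hcb]
    simp only [zTensor]
    rw [← mul_assoc, Finset.mul_sum]
    refine Finset.sum_congr rfl fun b _ => ?_
    rw [hprod b]; ring
  calc (∑ l : Fin (d+1) → Fin (n+1), (∏ p, c p (l p)) * zTensor k n d w l)
      = ∑ l : Fin (d+1) → Fin (n+1), ∑ b : Fin d → Fin n,
          (∏ p, c p (l p) * (if l p = cb b p then (1:k) else 0)) * w b :=
        Finset.sum_congr rfl fun l _ => step1 l
    _ = ∑ b : Fin d → Fin n, (∑ l : Fin (d+1) → Fin (n+1),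
          ∏ p, c p (l p) * (if l p = cb b p then (1:k) else 0)) * w b := by
        rw [Finset.sum_comm]
        exact Finset.sum_congr rfl fun b _ => (Finset.sum_mul _ _ _).symm
    _ = ∑ b : Fin d → Fin n, (∏ p, c p (cb b p)) * w b := by
        refine Finset.sum_congr rfl fun b _ => ?_
        congr 1
        rw [sum_pi_prod (fun p y => c p y * if y = cb b p then (1:k) else 0)]
        refine Finset.prod_congr rfl fun p _ => ?_
        simp only [mul_ite, mul_one, mul_zero]
        rw [Finset.sum_ite_eq']
        simp
    _ = (if j 0 = 0 then (1:k) else 0) * gfun S w m (fun q => j q.succ) := by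
        rw [gfun, Finset.mul_sum]
        refine Finset.sum_congr rfl fun b _ => ?_
        rw [Fin.prod_univ_succ, ← mul_assoc]
        have h0 : c 0 (cb b 0) = (if j 0 = 0 then (1:k) else 0) := by
          simp [hc, hcb]
        have hs : ∀ q : Fin d, c q.succ (cb b q.succ)
            = if (q:ℕ) < m then extMatrix k n S (j q.succ) ((b q).succ)
              else if j q.succ = (b q).succ then (1:k) else 0 := by
          intro q
          simp only [hc, hcb, Fin.cons_succ]
          by_cases h : (q:ℕ) < m
          · rw [if_pos (by simp [Fin.val_succ]; omega), if_pos h]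
          · rw [if_neg (by simp [Fin.val_succ]; omega), if_neg h]
        rw [h0, Finset.prod_congr rfl fun q _ => hs q]

/-- Pointwise form of the twisted-superpotential hypothesis. -/
lemma hw_point {n d : ℕ} (hd : 1 ≤ d) (S : Matrix (Fin n) (Fin n) k) (w : Tens k n d)
    (hw : w = ((-1 : k) ^ (d - 1)) •
      tauMapFrom k n d 0 (d - 1) (blockMap k n d S (fun p => (p : ℕ) = 0) w))
    (b : Fin d → Fin n) :
    w b = (-1:k)^(d-1) * ∑ e : Fin d → Fin n,
      (∏ q : Fin d, if (q:ℕ) = 0 then S (b (rotIdx d (d-1) q)) (e q)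
        else if b (rotIdx d (d-1) q) = e q then (1:k) else 0) * w e := by
  conv_lhs => rw [hw]
  rw [Pi.smul_apply, smul_eq_mul]
  congr 1
  rw [tau_apply _ _ _ (by omega), blockMap_apply]

/-- The rotation `rotIdx d (d-1)` as an equivalence. -/
def rotE (d : ℕ) : Equiv.Perm (Fin d) where
  toFun := rotIdx d (d-1)
  invFun := fun p => ⟨((p:ℕ)+1) % d, Nat.mod_lt _ p.pos⟩
  left_inv := by
    intro p
    have hp := p.isLt
    simp only [rotIdx]
    split_ifs with h1 h2
    · apply Fin.ext
      have h3 : (d-1) % d = d - 1 := Nat.mod_eq_of_lt (by omega)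
      simp only [h3]
      have h4 : (d - 1 + 1) = d := by omega
      simp [h4, Nat.mod_self]; omega
    · apply Fin.ext
      have h4 : ((p:ℕ) - 1 + 1) = (p:ℕ) := by omega
      simp [h4, Nat.mod_eq_of_lt hp]
    · omega
  right_inv := by
    intro p
    have hp := p.isLt
    by_cases h : (p:ℕ) = d - 1
    · have h2 : ((p:ℕ)+1) % d = 0 := by
        rw [show (p:ℕ)+1 = d by omega, Nat.mod_self]
      apply Fin.ext
      simp only [rotIdx, h2, if_pos rfl]
      have h3 : (d-1) % d = d - 1 := Nat.mod_eq_of_lt (by omega)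
      simp [h3]; omega
    · have h2 : ((p:ℕ)+1) % d = (p:ℕ)+1 := Nat.mod_eq_of_lt (by omega)
      apply Fin.ext
      simp only [rotIdx, h2]
      rw [if_neg (by omega), if_pos (by omega)]
      show (p:ℕ) + 1 - 1 = (p:ℕ)
      omega

lemma rotE_symm_castSucc {D : ℕ} (r : Fin D) :
    (rotE (D+1)).symm r.castSucc = r.succ := by
  apply Fin.ext
  show ((r.castSucc:ℕ) + 1) % (D+1) = (r.succ:ℕ)
  simp [Nat.mod_eq_of_lt (by omega : (r:ℕ)+1 < D+1)]

lemma rotE_symm_last {D : ℕ} :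
    (rotE (D+1)).symm (Fin.last D) = 0 := by
  apply Fin.ext
  show ((Fin.last D:ℕ) + 1) % (D+1) = 0
  simp

lemma rot1_zero {D : ℕ} : rotIdx (D+1) D (0 : Fin (D+1)) = Fin.last D := by
  apply Fin.ext
  simp [rotIdx, Nat.mod_eq_of_lt (by omega : D < D+1)]

lemma rot1_succ {D : ℕ} (r : Fin D) :
    rotIdx (D+1) D r.succ = r.castSucc := by
  apply Fin.ext
  simp only [rotIdx]
  rw [if_neg (by simp), if_pos (by simp [Fin.val_succ])]
  simp

lemma rearrange {α : Type*} [Fintype α] (c : k) (A : α → k) (B : α → α → k) (W : α → k) :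
    ∑ b, A b * (c * ∑ e, B b e * W e) = c * ∑ e, (∑ b, A b * B b e) * W e := by
  calc ∑ b, A b * (c * ∑ e, B b e * W e)
      = ∑ b, ∑ e, c * (A b * B b e * W e) := by
        refine Finset.sum_congr rfl fun b _ => ?_
        rw [Finset.mul_sum, Finset.mul_sum]
        exact Finset.sum_congr rfl fun e _ => by ring
    _ = ∑ e, ∑ b, c * (A b * B b e * W e) := Finset.sum_comm
    _ = c * ∑ e, (∑ b, A b * B b e) * W e := by
        rw [Finset.mul_sum]
        refine Finset.sum_congr rfl fun e _ => ?_
        rw [Finset.sum_mul, Finset.mul_sum]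

set_option maxHeartbeats 1600000 in
/-- The key lemma: one application of the twisted-superpotential relation shifts
`σ^{⊗m}` to `σ^{⊗(m+1)}` at the cost of a rotation and a sign. -/
lemma gfun_key {n d : ℕ} (S : Matrix (Fin n) (Fin n) k) (w : Tens k n d)
    (hw : w = ((-1 : k) ^ (d - 1)) •
      tauMapFrom k n d 0 (d - 1) (blockMap k n d S (fun p => (p : ℕ) = 0) w))
    (m : ℕ) (hm : m < d) (t : Fin d → Fin (n+1)) :
    gfun S w m t = (-1:k)^(d-1) * gfun S w (m+1) (fun q => t (rotIdx d (d-1) q)) := by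
  obtain ⟨D, rfl⟩ : ∃ D, d = D + 1 := ⟨d-1, by omega⟩
  simp only [Nat.add_sub_cancel]
  have hwp : ∀ b : Fin (D+1) → Fin n, w b = (-1:k)^D * ∑ e : Fin (D+1) → Fin n,
      (∏ q : Fin (D+1), if (q:ℕ) = 0 then S (b (rotIdx (D+1) D q)) (e q)
        else if b (rotIdx (D+1) D q) = e q then (1:k) else 0) * w e := by
    intro b
    simpa only [Nat.add_sub_cancel] using hw_point (by omega) S w hw b
  set coefm : Fin (D+1) → Fin n → k := fun q β =>
    if (q:ℕ) < m then extMatrix k n S (t q) β.succ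
    else if t q = β.succ then (1:k) else 0 with hcoefm
  calc gfun S w m t
      = ∑ b : Fin (D+1) → Fin n, (∏ q, coefm q (b q)) * w b := rfl
    _ = ∑ b : Fin (D+1) → Fin n, (∏ q, coefm q (b q)) *
          ((-1:k)^D * ∑ e : Fin (D+1) → Fin n,
            (∏ q : Fin (D+1), if (q:ℕ) = 0 then S (b (rotIdx (D+1) D q)) (e q)
              else if b (rotIdx (D+1) D q) = e q then (1:k) else 0) * w e) :=
        Finset.sum_congr rfl fun b _ => by rw [← hwp b]
    _ = (-1:k)^D * ∑ e : Fin (D+1) → Fin n,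
          (∑ b : Fin (D+1) → Fin n, (∏ q, coefm q (b q)) *
            (∏ q : Fin (D+1), if (q:ℕ) = 0 then S (b (rotIdx (D+1) D q)) (e q)
              else if b (rotIdx (D+1) D q) = e q then (1:k) else 0)) * w e :=
        rearrange ((-1:k)^D) (fun b => ∏ q, coefm q (b q))
          (fun b e => ∏ q : Fin (D+1), if (q:ℕ) = 0 then S (b (rotIdx (D+1) D q)) (e q)
              else if b (rotIdx (D+1) D q) = e q then (1:k) else 0) w
    _ = (-1:k)^D * ∑ e : Fin (D+1) → Fin n,
          ((∏ r : Fin D, coefm r.castSucc (e r.succ)) *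
            extMatrix k n S (t (Fin.last D)) ((e 0).succ)) * w e := by
        congr 1
        refine Finset.sum_congr rfl fun e _ => ?_
        congr 1
        have hre : ∀ b : Fin (D+1) → Fin n,
            (∏ q : Fin (D+1), if (q:ℕ) = 0 then S (b (rotIdx (D+1) D q)) (e q)
              else if b (rotIdx (D+1) D q) = e q then (1:k) else 0)
            = ∏ p : Fin (D+1), (if ((rotE (D+1)).symm p : ℕ) = 0
                then S (b p) (e ((rotE (D+1)).symm p))
                else if b p = e ((rotE (D+1)).symm p) then (1:k) else 0) := by
          intro b
          rw [← Equiv.prod_comp (rotE (D+1)) (fun p =>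
            (if ((rotE (D+1)).symm p : ℕ) = 0 then S (b p) (e ((rotE (D+1)).symm p))
              else if b p = e ((rotE (D+1)).symm p) then (1:k) else 0))]
          refine Finset.prod_congr rfl fun q _ => ?_
          simp only [Equiv.symm_apply_apply]
          rfl
        calc (∑ b : Fin (D+1) → Fin n, (∏ q, coefm q (b q)) *
              (∏ q : Fin (D+1), if (q:ℕ) = 0 then S (b (rotIdx (D+1) D q)) (e q)
                else if b (rotIdx (D+1) D q) = e q then (1:k) else 0))
            = ∑ b : Fin (D+1) → Fin n, ∏ p : Fin (D+1), (coefm p (b p) *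
                (if ((rotE (D+1)).symm p : ℕ) = 0 then S (b p) (e ((rotE (D+1)).symm p))
                  else if b p = e ((rotE (D+1)).symm p) then (1:k) else 0)) := by
              refine Finset.sum_congr rfl fun b _ => ?_
              rw [hre b, ← Finset.prod_mul_distrib]
          _ = ∏ p : Fin (D+1), ∑ β : Fin n, (coefm p β *
                (if ((rotE (D+1)).symm p : ℕ) = 0 then S β (e ((rotE (D+1)).symm p))
                  else if β = e ((rotE (D+1)).symm p) then (1:k) else 0)) :=
              sum_pi_prod (fun p β => coefm p β *
                (if ((rotE (D+1)).symm p : ℕ) = 0 then S β (e ((rotE (D+1)).symm p))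
                  else if β = e ((rotE (D+1)).symm p) then (1:k) else 0))
          _ = (∏ r : Fin D, coefm r.castSucc (e r.succ)) *
                extMatrix k n S (t (Fin.last D)) ((e 0).succ) := by
              rw [Fin.prod_univ_castSucc]
              congr 1
              · refine Finset.prod_congr rfl fun r _ => ?_
                calc (∑ β : Fin n, coefm r.castSucc β *
                      (if ((rotE (D+1)).symm r.castSucc : ℕ) = 0
                        then S β (e ((rotE (D+1)).symm r.castSucc))
                        else if β = e ((rotE (D+1)).symm r.castSucc) then (1:k) else 0))
                    = ∑ β : Fin n, if β = e r.succ then coefm r.castSucc β else 0 := by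
                      refine Finset.sum_congr rfl fun β _ => ?_
                      rw [rotE_symm_castSucc]
                      rw [if_neg (by simp [Fin.val_succ])]
                      by_cases h : β = e r.succ
                      · rw [if_pos h, if_pos h, mul_one]
                      · rw [if_neg h, if_neg h, mul_zero]
                  _ = coefm r.castSucc (e r.succ) := by rw [Finset.sum_ite_eq']; simp
              · calc (∑ β : Fin n, coefm (Fin.last D) β *
                      (if ((rotE (D+1)).symm (Fin.last D) : ℕ) = 0
                        then S β (e ((rotE (D+1)).symm (Fin.last D)))
                        else if β = e ((rotE (D+1)).symm (Fin.last D)) then (1:k) else 0))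
                    = ∑ β : Fin n, (if t (Fin.last D) = β.succ then (1:k) else 0) * S β (e 0) := by
                      refine Finset.sum_congr rfl fun β _ => ?_
                      rw [rotE_symm_last]
                      rw [if_pos (by simp)]
                      simp only [hcoefm]
                      rw [if_neg (by simp [Fin.val_last]; omega)]
                  _ = extMatrix k n S (t (Fin.last D)) ((e 0).succ) := sum_delta_mul _ S _
    _ = (-1:k)^D * gfun S w (m+1) (fun q => t (rotIdx (D+1) D q)) := by
        congr 1
        rw [gfun]
        refine Finset.sum_congr rfl fun e _ => ?_
        congr 1
        rw [Fin.prod_univ_succ, mul_comm]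
        congr 1
        · rw [if_pos (by simp), rot1_zero]
        · refine Finset.prod_congr rfl fun r _ => ?_
          rw [rot1_succ]
          simp only [hcoefm]
          by_cases h : (r:ℕ) < m <;>
            simp [Fin.coe_castSucc, Fin.val_succ, Nat.succ_lt_succ_iff, h]

lemma rotIdx_val {d : ℕ} (q : Fin d) :
    ((rotIdx d (d-1) q : Fin d) : ℕ) = ((q:ℕ) + (d-1)) % d := by
  have hq := q.isLt
  simp only [rotIdx]
  split_ifs with h1 h2
  · simp [h1]
  · have h3 : ((q:ℕ) + (d-1)) = ((q:ℕ) - 1) + d := by omega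
    rw [h3, Nat.add_mod_right]
    exact (Nat.mod_eq_of_lt (by omega)).symm
  · omega

lemma rotIdx_iterate {d : ℕ} (m : ℕ) (q : Fin d) :
    (((rotIdx d (d-1))^[m] q : Fin d) : ℕ) = ((q:ℕ) + m * (d-1)) % d := by
  induction m with
  | zero => simp [Nat.mod_eq_of_lt q.isLt]
  | succ m ih =>
    rw [Function.iterate_succ_apply', rotIdx_val, ih, Nat.mod_add_mod]
    congr 1
    ring

lemma rotIdx_iterate_self {d : ℕ} (q : Fin d) :
    (rotIdx d (d-1))^[d] q = q := by
  apply Fin.ext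
  rw [rotIdx_iterate, Nat.add_mul_mod_self_left, Nat.mod_eq_of_lt q.isLt]

lemma gfun_zero_eq {n d : ℕ} (hd : 1 ≤ d) (S : Matrix (Fin n) (Fin n) k) (w : Tens k n d)
    (hw : w = ((-1 : k) ^ (d - 1)) •
      tauMapFrom k n d 0 (d - 1) (blockMap k n d S (fun p => (p : ℕ) = 0) w))
    (t : Fin d → Fin (n+1)) :
    gfun S w 0 t = gfun S w d t := by
  have main : ∀ m, m ≤ d →
      gfun S w 0 t = ((-1:k)^(d-1))^m * gfun S w m (fun q => t ((rotIdx d (d-1))^[m] q)) := by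
    intro m
    induction m with
    | zero => intro _; simp
    | succ m ih =>
      intro hm
      rw [ih (by omega), gfun_key S w hw m (by omega)]
      rw [← mul_assoc, ← pow_succ]
      congr 1
  have h1 := main d le_rfl
  have h2 : (fun q => t ((rotIdx d (d-1))^[d] q)) = t := by
    funext q; rw [rotIdx_iterate_self]
  rw [h2] at h1
  have h3 : (((-1:k)^(d-1))^d) = 1 := by
    rw [← pow_mul]
    refine Even.neg_one_pow ?_
    have h4 := Nat.even_mul_succ_self (d-1)
    rwa [show (d-1) + 1 = d by omega] at h4
  rw [h3, one_mul] at h1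
  exact h1

lemma rotIdx_zero' {D : ℕ} (q : Fin D) : rotIdx D 0 q = q := by
  simp only [rotIdx]
  split_ifs with h1 h2
  · exact Fin.ext (by simp [Nat.zero_mod]; omega)
  · omega
  · rfl

lemma rotIdx_apply_zero {d m : ℕ} (hm : m ≤ d) :
    rotIdx (d+1) m (0 : Fin (d+1)) = ⟨m, by omega⟩ := by
  apply Fin.ext
  simp [rotIdx, Nat.mod_eq_of_lt (by omega : m < d+1)]

lemma rotIdx_val' (D m : ℕ) (q : Fin D) :
    ((rotIdx D m q : Fin D) : ℕ)
      = if (q:ℕ) = 0 then m % D else if (q:ℕ) ≤ m then (q:ℕ) - 1 else (q:ℕ) := by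
  simp only [rotIdx]
  split_ifs <;> rfl

lemma rot_compat {d m : ℕ} (hd : 1 ≤ d) (hm : m < d) (q : Fin d) :
    rotIdx (d+1) d (rotIdx (d+1) (m+1) q.succ)
      = rotIdx (d+1) m (rotIdx d (d-1) q).succ := by
  have hq := q.isLt
  have e1 : (d-1) % d = d - 1 := Nat.mod_eq_of_lt (by omega)
  have e2 : d % (d+1) = d := Nat.mod_eq_of_lt (by omega)
  have e3 : m % (d+1) = m := Nat.mod_eq_of_lt (by omega)
  have e4 : (m+1) % (d+1) = m+1 := Nat.mod_eq_of_lt (by omega)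
  apply Fin.ext
  simp only [rotIdx_val', Fin.val_succ, e1, e2, e3, e4]
  split_ifs <;> (try contradiction) <;> omega

end Main

section Final

variable {k : Type*} [Field k]

lemma rot_top {d m : ℕ} (hm : m < d) :
    rotIdx (d+1) d (⟨m+1, by omega⟩ : Fin (d+1)) = ⟨m, by omega⟩ := by
  apply Fin.ext
  rw [rotIdx_val']
  rw [if_neg (by simp), if_pos (by simp; omega)]
  show m + 1 - 1 = m
  omega

lemma sign_shuffle {x y z u δ G : k} (h : z * u = x * y) :
    x * (δ * (y * G)) = z * (u * (δ * G)) := by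
  calc x * (δ * (y * G)) = (x * y) * (δ * G) := by ring
    _ = (z * u) * (δ * G) := by rw [h]
    _ = z * (u * (δ * G)) := by ring

end Final

set_option maxHeartbeats 1600000 in
/-- if `w ∈ V^{⊗d}` (`d ≥ 2`) is a twisted superpotential with respect
to the bijection `σ` of `V` (matrix `S`), then
`ŵ = Σ_{m=0}^{d} (-1)^m τ_{d+1}^m ((1 ⊗ σ^{⊗m} ⊗ 1^{⊗(d-m)})(z ⊗ w))`
is a superpotential of degree `d+1`, i.e. `ŵ = (-1)^d τ_{d+1}^d (ŵ)`. -/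
theorem stmt6 (k : Type*) [Field k] (n d : ℕ) (hd : 2 ≤ d)
    (S : Matrix (Fin n) (Fin n) k) (hS : IsUnit S.det) (w : Tens k n d)
    (hw : w = ((-1 : k) ^ (d - 1)) •
      tauMapFrom k n d 0 (d - 1) (blockMap k n d S (fun p => (p : ℕ) = 0) w))
    (what : Tens k (n + 1) (d + 1))
    (hwhat : what = ∑ m ∈ Finset.range (d + 1), ((-1 : k) ^ m) •
      tauMapFrom k (n + 1) (d + 1) 0 m
        (blockMap k (n + 1) (d + 1) (extMatrix k n S)
          (fun p => 1 ≤ (p : ℕ) ∧ (p : ℕ) ≤ m) (zTensor k n d w))) :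
    what = ((-1 : k) ^ d) • tauMapFrom k (n + 1) (d + 1) 0 d what := by
  have hzero := gfun_zero_eq (by omega : 1 ≤ d) S w hw
  subst hwhat
  funext i
  rw [Pi.smul_apply, smul_eq_mul]
  rw [tau_apply _ _ _ (by omega : d < d + 1)]
  rw [Finset.sum_apply, Finset.sum_apply]
  simp only [Pi.smul_apply, smul_eq_mul]
  set i0 : Fin (d+1) → Fin (n+1) := fun q => i (rotIdx (d+1) d q) with hi0
  have hF : ∀ (m : ℕ), m < d + 1 → ∀ j : Fin (d+1) → Fin (n+1),
      tauMapFrom k (n+1) (d+1) 0 m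
        (blockMap k (n+1) (d+1) (extMatrix k n S)
          (fun p => 1 ≤ (p : ℕ) ∧ (p : ℕ) ≤ m) (zTensor k n d w)) j
      = (if j (rotIdx (d+1) m 0) = 0 then (1:k) else 0)
          * gfun S w m (fun q => j (rotIdx (d+1) m q.succ)) := by
    intro m hm j
    rw [tau_apply _ _ _ hm, blockZ]
  rw [Finset.sum_range_succ]
  conv_rhs => rw [Finset.sum_range_succ']
  rw [mul_add, Finset.mul_sum]
  congr 1
  · refine Finset.sum_congr rfl fun m hm => ?_
    have hmd : m < d := Finset.mem_range.mp hm
    rw [hF m (by omega) i, hF (m+1) (by omega) i0]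
    rw [gfun_key S w hw m hmd]
    simp only [hi0, rotIdx_apply_zero (show m + 1 ≤ d by omega),
      rotIdx_apply_zero (show m ≤ d by omega), rot_top hmd,
      rot_compat (show 1 ≤ d by omega) hmd]
    have hsign : (-1:k)^d * (-1:k)^(m+1) = (-1:k)^m * (-1:k)^(d-1) := by
      rw [← pow_add, ← pow_add, show d + (m+1) = (m + (d-1)) + 2 by omega,
        pow_succ, pow_succ]
      ring
    exact sign_shuffle hsign
  · rw [hF d (by omega) i, hF 0 (by omega) i0]
    simp only [rotIdx_zero', pow_zero, one_mul, hi0]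
    rw [hzero]
end

section
/- Let V be a finite-dimensional vector space with basis {x_1,...,x_n} and let w ∈ V^{⊗d}. Suppose w = (x_1,...,x_n)M(θ_1,...,θ_n)^t = (θ_1,...,θ_n)N(x_1,...,x_n)^t, where M, N are invertible n×n matrices and θ_1,...,θ_n ∈ V^{⊗(d-1)} form a basis of a subspace C ⊆ V^{⊗(d-1)}. Then w = (-1)^{d-1}τ_d^{d-1}(ξ⊗id^{⊗(d-1)})(w), where ξ: V → V is the linear map defined by ξ(x_1,...,x_n) = (-1)^{d+1}(x_1,...,x_n)N^tM^{-1}. -/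
open Matrix
lemma tau_apply_s18 {k : Type*} [Field k] {n : ℕ} (e : ℕ) (m : ℕ) (hm : m < e + 2)
    (v : Tens k n (e+2)) (i : Fin (e+2) → Fin n) :
    tauMapFrom k n (e+2) 0 m v i =
      v (fun p => if (p:ℕ) = 0 then i ⟨m, hm⟩
        else if h : (p:ℕ) ≤ m then i ⟨(p:ℕ)-1, by omega⟩ else i p) := by
  induction m generalizing i with
  | zero =>
    simp only [tauMapFrom, LinearMap.id_apply]
    congr 1
    funext p
    by_cases h0 : (p:ℕ) = 0
    · have hp : p = ⟨0, hm⟩ := Fin.ext h0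
      simp only [h0, if_pos, hp]
    · simp [h0, Nat.le_zero]
  | succ m ih =>
    have hm' : m < e + 2 := by omega
    have hs : adjSwap (e+2) m = Equiv.swap ⟨m, by omega⟩ ⟨m+1, by omega⟩ := by
      simp [adjSwap, hm]
    simp only [tauMapFrom, LinearMap.comp_apply, permMap, LinearMap.coe_mk, AddHom.coe_mk,
      zero_add]
    rw [ih hm' (i ∘ ⇑(adjSwap (e+2) m))]
    congr 1
    funext p
    simp only [Function.comp_apply, hs, Equiv.swap_apply_def]
    split_ifs <;>
      first
        | rfl
        | (congr 1; apply Fin.ext; clear ih hs; simp only [Fin.ext_iff, Fin.val_mk] at *; omega)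

lemma blockMap_apply_s18 {k : Type*} [Field k] {n : ℕ} (e : ℕ) (S : Matrix (Fin n) (Fin n) k)
    (w : Tens k n (e+2)) (i : Fin (e+2) → Fin n) :
    blockMap k n (e+2) S (fun p => (p:ℕ) = 0) w i
      = ∑ a : Fin n, S (i 0) a * w (Fin.cons a (Fin.tail i)) := by
  simp only [blockMap, LinearMap.coe_mk, AddHom.coe_mk]
  rw [← Equiv.sum_comp (Fin.consEquiv (fun _ : Fin (e+2) => Fin n))]
  rw [Fintype.sum_prod_type]
  simp only [Fin.consEquiv, Equiv.coe_fn_mk]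
  refine Finset.sum_congr rfl fun a _ => ?_
  have key : ∀ t : Fin (e+1) → Fin n,
      (∏ p : Fin (e+2), if (p:ℕ) = 0 then S (i p) ((Fin.cons a t : Fin (e+2) → Fin n) p)
        else if i p = (Fin.cons a t : Fin (e+2) → Fin n) p then (1:k) else 0)
      = S (i 0) a * ∏ p : Fin (e+1), (if i p.succ = t p then (1:k) else 0) := by
    intro t
    rw [Fin.prod_univ_succ]
    congr 1
    all_goals first
      | simp
      | (refine Finset.prod_congr rfl fun p _ => ?_; simp [Fin.val_succ])
  refine (Finset.sum_congr rfl fun t _ => congrArg (· * w (Fin.cons a t)) (key t)).trans ?_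
  rw [Finset.sum_eq_single (Fin.tail i)]
  · have h1 : (∏ p : Fin (e+1), (if i p.succ = Fin.tail i p then (1:k) else 0)) = 1 := by
      simp [Fin.tail]
    rw [h1, mul_one]
  · intro t _ ht
    obtain ⟨p, hp⟩ := Function.ne_iff.mp (Ne.symm ht)
    have h0 : (∏ p : Fin (e+1), (if i p.succ = t p then (1:k) else 0)) = 0 :=
      Finset.prod_eq_zero (Finset.mem_univ p) (if_neg (by simpa [Fin.tail] using hp))
    rw [h0]
    ring
  · intro h
    exact absurd (Finset.mem_univ _) h

lemma tau_apply_top {k : Type*} [Field k] {n : ℕ} (e : ℕ)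
    (v : Tens k n (e+2)) (i : Fin (e+2) → Fin n) :
    tauMapFrom k n (e+2) 0 (e+1) v i
      = v (Fin.cons (i (Fin.last (e+1))) (Fin.init i)) := by
  rw [tau_apply_s18 e (e+1) (by omega)]
  congr 1
  funext p
  refine Fin.cases ?_ ?_ p
  · simp [Fin.last]
  · intro q
    have hq0 : ((q.succ : Fin (e+2)) : ℕ) ≠ 0 := by simp
    have hle : ((q.succ : Fin (e+2)) : ℕ) ≤ e + 1 := by simp [Fin.val_succ]; omega
    rw [if_neg hq0, dif_pos hle, Fin.cons_succ]
    exact congrArg i (Fin.ext (by simp))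

lemma tau_block {k : Type*} [Field k] {n : ℕ} (e : ℕ) (S : Matrix (Fin n) (Fin n) k)
    (v : Tens k n (e+2)) (i : Fin (e+2) → Fin n) :
    tauMapFrom k n (e+2) 0 (e+1)
        (blockMap k n (e+2) S (fun p => (p:ℕ) = 0) v) i
      = ∑ a : Fin n, S (i (Fin.last (e+1))) a * v (Fin.cons a (Fin.init i)) := by
  rw [tau_apply_top, blockMap_apply_s18]
  simp

/-- suppose `w ∈ V^{⊗(e+2)}` admits the two expressions
`w = Σ_{i,j} M_{ij} x_i ⊗ θ_j` and `w = Σ_{i,j} N_{ij} θ_i ⊗ x_j` with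
`{θ_1,…,θ_n} ⊆ V^{⊗(e+1)}` linearly independent and `M, N` invertible `n×n`
matrices.  Then `w = (-1)^{d-1} τ_d^{d-1}((ξ ⊗ 1^{⊗(d-1)}) w)` for `d = e+2`, where
`ξ` is the linear automorphism of `V` with matrix `(-1)^{d+1} Nᵀ M⁻¹`, i.e. `w` is a
twisted superpotential with respect to `ξ`. -/
theorem stmt18 (k : Type*) [Field k] (n e : ℕ)
    (M N : Matrix (Fin n) (Fin n) k) (hM : IsUnit M.det) (hN : IsUnit N.det)
    (θ : Fin n → Tens k n (e + 1)) (hθ : LinearIndependent k θ)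
    (w : Tens k n (e + 2))
    (h1 : w = fun idx => ∑ i : Fin n, ∑ j : Fin n,
      M i j * ((if idx 0 = i then (1 : k) else 0) * θ j (Fin.tail idx)))
    (h2 : w = fun idx => ∑ i : Fin n, ∑ j : Fin n,
      N i j * (θ i (Fin.init idx) * (if idx (Fin.last (e + 1)) = j then (1 : k) else 0))) :
    w = ((-1 : k) ^ (e + 1)) • tauMapFrom k n (e + 2) 0 (e + 1)
        (blockMap k n (e + 2) (((-1 : k) ^ (e + 3)) • (Nᵀ * M⁻¹))
          (fun p => (p : ℕ) = 0) w) := by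
  have hMinv : M⁻¹ * M = 1 := Matrix.nonsing_inv_mul M hM
  have hsign : ((-1:k)^(e+1)) * ((-1:k)^(e+3)) = 1 := by
    rw [← pow_add]
    have h : e+1+(e+3) = 2*(e+2) := by ring
    rw [h, pow_mul, neg_one_sq, one_pow]
  funext i
  simp only [Pi.smul_apply, smul_eq_mul]
  rw [tau_block]
  have hw1 : ∀ a : Fin n, w (Fin.cons a (Fin.init i))
      = ∑ j : Fin n, M a j * θ j (Fin.init i) := by
    intro a
    rw [h1]
    simp only [Fin.cons_zero, Fin.tail_cons]
    rw [Finset.sum_comm]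
    refine Finset.sum_congr rfl fun j _ => ?_
    simp [ite_mul, mul_ite, Finset.sum_ite_eq]
  have hw2 : w i = ∑ i' : Fin n, N i' (i (Fin.last (e+1))) * θ i' (Fin.init i) := by
    conv_lhs => rw [h2]
    refine Finset.sum_congr rfl fun i' _ => ?_
    simp [mul_ite, Finset.sum_ite_eq]
  rw [hw2, Finset.mul_sum]
  have hterm : ∀ a : Fin n,
      (-1:k)^(e+1) * ((((-1:k)^(e+3)) • (Nᵀ * M⁻¹)) (i (Fin.last (e+1))) a
        * w (Fin.cons a (Fin.init i)))
      = (Nᵀ * M⁻¹) (i (Fin.last (e+1))) a * ∑ j : Fin n, M a j * θ j (Fin.init i) := by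
    intro a
    rw [hw1, Matrix.smul_apply, smul_eq_mul]
    calc (-1:k)^(e+1) * (((-1:k)^(e+3) * (Nᵀ * M⁻¹) (i (Fin.last (e+1))) a)
          * ∑ j : Fin n, M a j * θ j (Fin.init i))
        = ((-1:k)^(e+1) * (-1:k)^(e+3)) * ((Nᵀ * M⁻¹) (i (Fin.last (e+1))) a
          * ∑ j : Fin n, M a j * θ j (Fin.init i)) := by ring
      _ = (Nᵀ * M⁻¹) (i (Fin.last (e+1))) a * ∑ j : Fin n, M a j * θ j (Fin.init i) := by
          rw [hsign, one_mul]
  simp only [hterm]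
  have hsplit : ∀ a : Fin n,
      (Nᵀ * M⁻¹) (i (Fin.last (e+1))) a * ∑ j : Fin n, M a j * θ j (Fin.init i)
      = ∑ j : Fin n, (Nᵀ * M⁻¹) (i (Fin.last (e+1))) a * (M a j * θ j (Fin.init i)) :=
    fun a => Finset.mul_sum _ _ _
  simp only [hsplit]
  rw [Finset.sum_comm]
  refine Finset.sum_congr rfl fun j _ => ?_
  have hpull : ∑ a : Fin n, (Nᵀ * M⁻¹) (i (Fin.last (e+1))) a * (M a j * θ j (Fin.init i))
      = (∑ a : Fin n, (Nᵀ * M⁻¹) (i (Fin.last (e+1))) a * M a j) * θ j (Fin.init i) := by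
    rw [Finset.sum_mul]
    exact Finset.sum_congr rfl fun a _ => by ring
  rw [hpull, ← Matrix.mul_apply, Matrix.mul_assoc, hMinv, Matrix.mul_one,
    Matrix.transpose_apply]
end
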